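/- arXiv:1012.5983 — 2 statements merged into one kernel-verified Lean document; each statement's English description precedes it below -/
import Mathlib

section
/- For integers $s, b, t$ with $t \ge 0$, the identity $\binom{s-b-2}{t+1}_v [b-t] + \binom{s-b-2}{t}_v [s-1-t] = [b+1]\binom{s-b-1}{t+1}_v$ holds in $\mathbb{Q}(v)$, where $[n] = (v^n - v^{-n})/(v-v^{-1})$ and $\binom{a}{t}_v$ denotes the balanced Gaussian binomial coefficient. -/
/-!
Write `⟨n⟩ = v^n - v^{-n}`, so that `[n] = ⟨n⟩ / ⟨1⟩`. Both `\binom{s-b-2}{t+1}_v` and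
`\binom{s-b-1}{t+1}_v` are `\binom{s-b-2}{t}_v` times a single ratio of `⟨·⟩`'s, so after clearing
the denominators `⟨1⟩` and `⟨t+1⟩` (nonzero, since `v^n` has valuation `n` at infinity) the identity
becomes the three-term relation `⟨p-r⟩⟨q-r⟩ + ⟨r⟩⟨p+q-r⟩ = ⟨p⟩⟨q⟩` with `p = b+1`, `q = s-b-1`,
`r = t+1`, an identity of Laurent polynomials.
-/

open scoped BigOperators

noncomputable def qint (n : ℤ) : RatFunc ℚ :=
  (RatFunc.X ^ n - RatFunc.X ^ (-n)) / (RatFunc.X - RatFunc.X⁻¹)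

noncomputable def qbinom (a : ℤ) (t : ℕ) : RatFunc ℚ :=
  ∏ s ∈ Finset.range t,
    (RatFunc.X ^ (a - s) - RatFunc.X ^ (-(a - s))) /
      (RatFunc.X ^ ((s : ℤ) + 1) - RatFunc.X ^ (-((s : ℤ) + 1)))

section BalancedDiff

variable {K : Type*} [Field K]

def balancedDiff (x : K) (n : ℤ) : K := x ^ n - x ^ (-n)

theorem balancedDiff_mul_balancedDiff {x : K} (hx : x ≠ 0) (p q r : ℤ) :
    balancedDiff x (p - r) * balancedDiff x (q - r) +
        balancedDiff x r * balancedDiff x (p + q - r) =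
      balancedDiff x p * balancedDiff x q := by
  simp only [balancedDiff, sub_mul, mul_sub, ← zpow_add₀ hx]
  ring_nf

theorem RatFunc.balancedDiff_X_ne_zero {n : ℤ} (hn : n ≠ 0) :
    balancedDiff (RatFunc.X : RatFunc K) n ≠ 0 := by
  classical
  intro h
  have := congrArg (RatFunc.inftyValuation K) (sub_eq_zero.mp h)
  simp only [RatFunc.inftyValuation.X_zpow, WithZero.exp_inj] at this
  omega

end BalancedDiff

section QBinom

open RatFunc

theorem qint_eq_div (n : ℤ) : qint n = balancedDiff X n / balancedDiff X 1 := by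
  simp [qint, balancedDiff, zpow_neg]

theorem qbinom_eq_prod_div_prod (a : ℤ) (t : ℕ) :
    qbinom a t = (∏ j ∈ Finset.range t, balancedDiff X (a - j)) /
      ∏ j ∈ Finset.range t, balancedDiff X ((j : ℤ) + 1) :=
  Finset.prod_div_distrib ..

theorem qbinom_succ (a : ℤ) (t : ℕ) :
    qbinom a (t + 1) = qbinom a t * (balancedDiff X (a - t) / balancedDiff X ((t : ℤ) + 1)) :=
  Finset.prod_range_succ ..

theorem qbinom_add_one_succ (a : ℤ) (t : ℕ) :
    qbinom (a + 1) (t + 1) =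
      qbinom a t * (balancedDiff X (a + 1) / balancedDiff X ((t : ℤ) + 1)) := by
  rw [qbinom_eq_prod_div_prod, qbinom_eq_prod_div_prod, Finset.prod_range_succ',
    Finset.prod_range_succ, mul_div_mul_comm]
  push_cast
  simp only [add_sub_add_right_eq_sub, sub_zero]

end QBinom

/-- The identity
`\binom{s-b-2}{t+1}[b-t] + \binom{s-b-2}{t}[s-1-t] = [b+1]\binom{s-b-1}{t+1}`
in `ℚ(v)`. -/
theorem qbinom_qint_identity (s b : ℤ) (t : ℕ) :
    qbinom (s - b - 2) (t + 1) * qint (b - t) + qbinom (s - b - 2) t * qint (s - 1 - t) =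
      qint (b + 1) * qbinom (s - b - 1) (t + 1) := by
  obtain ⟨a, rfl⟩ : ∃ a, s = a + b + 2 := ⟨s - b - 2, by ring⟩
  rw [show a + b + 2 - b - 1 = a + 1 by ring, show a + b + 2 - b - 2 = a by ring,
    qbinom_add_one_succ, qbinom_succ, qint_eq_div, qint_eq_div, qint_eq_div]
  have h1 : balancedDiff (RatFunc.X : RatFunc ℚ) 1 ≠ 0 :=
    RatFunc.balancedDiff_X_ne_zero one_ne_zero
  have ht : balancedDiff (RatFunc.X : RatFunc ℚ) ((t : ℤ) + 1) ≠ 0 :=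
    RatFunc.balancedDiff_X_ne_zero (by positivity)
  have key := balancedDiff_mul_balancedDiff (K := RatFunc ℚ) RatFunc.X_ne_zero
    (b + 1) (a + 1) ((t : ℤ) + 1)
  field_simp
  ring_nf at key ⊢
  linear_combination qbinom a t * key
end

section
/- Let $S$ be an algebra over a field with anti-automorphism $*$, $e \in S$ an idempotent with $e^* = e$, and suppose the left ideal $Se$ has a basis $\{x_\alpha e\}$ and the right ideal $eS$ has the basis $\{e x_\alpha^*\} = \{(x_\alpha e)^*\}$. If there is a bilinear form on $Se$ with dual bases available (i.e., for each $\alpha$ there is $x'_\alpha$ with $e (x'_\beta)^* x_\alpha e = \delta_{\alpha\beta}\, e$), then the multiplication map $Se \otimes eS \to SeS$ is an isomorphism of $S$-bimodules; in particular the elements $\{x_\alpha e x_\beta^*\}$ are linearly independent. -/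
/-!
The maps `z ↦ e x'_γ* z x'_δ e` act as dual functionals to the products `x_α e x_β*`: by the
dual relation and its image under `*`, they send `x_α e x_β*` to `δ_{αγ} δ_{βδ} e`, so these
products are linearly independent. They are the images under multiplication of the tensor basis
`(x_α e) ⊗ (e x_β*)` of `Se ⊗ eS`, whence injectivity; the image is spanned by
`(s e)(e u) = s e u`.
-/

open scoped TensorProduct

/-- The multiplication map `Se ⊗[k] eS → S`, `a ⊗ b ↦ ab`, where
`Se = range (· * e)` and `eS = range (e * ·)`. -/
noncomputable def multMap (k : Type*) [Field k] (S : Type*) [Ring S] [Algebra k S]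
    (e : S) :
    (LinearMap.range (LinearMap.mulRight k e)) ⊗[k]
      (LinearMap.range (LinearMap.mulLeft k e)) →ₗ[k] S :=
  TensorProduct.lift ((LinearMap.mul k S).compl₁₂
    (LinearMap.range (LinearMap.mulRight k e)).subtype
    (LinearMap.range (LinearMap.mulLeft k e)).subtype)

theorem LinearIndependent.of_pairwise_map_eq_zero {ι R M N : Type*} [Ring R] [AddCommGroup M]
    [Module R M] [AddCommGroup N] [Module R N] [NoZeroSMulDivisors R N]
    (v : ι → M) (f : ι → M →ₗ[R] N)
    (h1 : Pairwise fun i j ↦ f i (v j) = 0) (h2 : ∀ i, f i (v i) ≠ 0) :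
    LinearIndependent R v := by
  refine linearIndependent_iff'.mpr fun s g hrel i hi ↦ ?_
  have aux (j : ι) (_ : j ∈ s) (hji : j ≠ i) : g j • f i (v j) = 0 := by simp [h1 hji.symm]
  have key : g i • f i (v i) = 0 := by
    simpa [s.sum_eq_single i aux (by simp [hi])] using congr_arg (f i) hrel
  exact (eq_zero_or_eq_zero_of_smul_eq_zero key).resolve_right (h2 i)

section

variable {k S ι : Type*} [Field k] [Ring S] [Algebra k S] {st : S →ₗ[k] S} {e : S}
  {x x' : ι → S}

theorem range_multMap (he : IsIdempotentElem e) :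
    LinearMap.range (multMap k S e) = Submodule.span k {z : S | ∃ a b : S, z = a * e * b} := by
  rw [LinearMap.range_eq_map, ← TensorProduct.span_tmul_eq_top, Submodule.map_span]
  congr 1
  ext z
  simp only [Set.mem_image, Set.mem_ofPred_eq]
  constructor
  · rintro ⟨_, ⟨⟨_, a, rfl⟩, ⟨_, b, rfl⟩, rfl⟩, rfl⟩
    exact ⟨a, e * b, by simp [multMap, mul_assoc]⟩
  · rintro ⟨a, b, rfl⟩
    refine ⟨_, ⟨⟨a * e, a, rfl⟩, ⟨e * b, b, rfl⟩, rfl⟩, ?_⟩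
    simp [multMap, mul_assoc, ← mul_assoc e e b, he.eq]

theorem range_mulRight_eq_span
    (hspan : ∀ s : S, s * e ∈ Submodule.span k (Set.range fun i ↦ x i * e)) :
    LinearMap.range (LinearMap.mulRight k e) = Submodule.span k (Set.range fun i ↦ x i * e) := by
  refine le_antisymm ?_ (Submodule.span_le.mpr ?_)
  · rintro _ ⟨s, rfl⟩
    exact hspan s
  · rintro _ ⟨i, rfl⟩
    exact ⟨x i, rfl⟩

theorem map_range_mulRight_eq_range_mulLeft (hanti : ∀ x y : S, st (x * y) = st y * st x)
    (hinv : ∀ x : S, st (st x) = x) (hse : st e = e) :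
    (LinearMap.range (LinearMap.mulRight k e)).map st = LinearMap.range (LinearMap.mulLeft k e) := by
  have hcomm : st ∘ₗ LinearMap.mulRight k e = LinearMap.mulLeft k e ∘ₗ st :=
    LinearMap.ext fun s ↦ by simp [hanti, hse]
  rw [← LinearMap.range_comp, hcomm, LinearMap.range_comp,
    LinearMap.range_eq_top.mpr (Function.Involutive.surjective hinv), Submodule.map_top]

theorem mul_mul_star_sandwich_eq_ite [DecidableEq ι]
    (hanti : ∀ x y : S, st (x * y) = st y * st x) (hinv : ∀ x : S, st (st x) = x)
    (hse : st e = e) (hdual : ∀ i j, e * st (x' j) * (x i * e) = if i = j then e else 0)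
    (p q : ι × ι) :
    e * st (x' q.1) * (x p.1 * e * st (x p.2)) * (x' q.2 * e) = if p = q then e else 0 := by
  have hdual' : ∀ i j, e * st (x i) * (x' j * e) = if i = j then e else 0 := fun i j ↦ by
    simpa [hanti, hinv _, hse, apply_ite st, mul_assoc] using congr_arg st (hdual i j)
  obtain ⟨i, j⟩ := p
  obtain ⟨i', j'⟩ := q
  calc e * st (x' i') * (x i * e * st (x j)) * (x' j' * e)
      = (e * st (x' i') * (x i * e)) * (st (x j) * (x' j' * e)) := by simp only [mul_assoc]
    _ = if (i, j) = (i', j') then e else 0 := by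
      by_cases hi : i = i'
      · subst hi
        rw [hdual, if_pos rfl, ← mul_assoc, hdual']
        simp
      · simp [hdual, hi]

theorem linearIndependent_mul_mul_star [DecidableEq ι]
    (hanti : ∀ x y : S, st (x * y) = st y * st x) (hinv : ∀ x : S, st (st x) = x)
    (hse : st e = e) (hx : ∀ i, x i * e ≠ 0)
    (hdual : ∀ i j, e * st (x' j) * (x i * e) = if i = j then e else 0) :
    LinearIndependent k fun p : ι × ι ↦ x p.1 * e * st (x p.2) := by
  refine .of_pairwise_map_eq_zero _
    (fun q ↦ LinearMap.mulLeftRight k (e * st (x' q.1), x' q.2 * e)) (fun q p hqp ↦ ?_) fun p ↦ ?_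
  · simp [mul_mul_star_sandwich_eq_ite hanti hinv hse hdual, hqp.symm]
  · have he : e ≠ 0 := fun he ↦ hx p.1 (by rw [he, mul_zero])
    simpa [mul_mul_star_sandwich_eq_ite hanti hinv hse hdual] using he

noncomputable def basisRangeMulRight (hli : LinearIndependent k fun i ↦ x i * e)
    (hspan : ∀ s : S, s * e ∈ Submodule.span k (Set.range fun i ↦ x i * e)) :
    Module.Basis ι k (LinearMap.range (LinearMap.mulRight k e)) :=
  (Module.Basis.span hli).map (LinearEquiv.ofEq _ _ (range_mulRight_eq_span hspan).symm)

@[simp]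
theorem coe_basisRangeMulRight (hli : LinearIndependent k fun i ↦ x i * e)
    (hspan : ∀ s : S, s * e ∈ Submodule.span k (Set.range fun i ↦ x i * e)) (i : ι) :
    (basisRangeMulRight hli hspan i : S) = x i * e := by
  simp [basisRangeMulRight, Module.Basis.span_apply]

noncomputable def basisRangeMulLeft (hanti : ∀ x y : S, st (x * y) = st y * st x)
    (hinv : ∀ x : S, st (st x) = x) (hse : st e = e)
    (hli : LinearIndependent k fun i ↦ x i * e)
    (hspan : ∀ s : S, s * e ∈ Submodule.span k (Set.range fun i ↦ x i * e)) :
    Module.Basis ι k (LinearMap.range (LinearMap.mulLeft k e)) :=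
  ((basisRangeMulRight hli hspan).map
    ((LinearEquiv.ofInvolutive st hinv).submoduleMap _)).map
    (LinearEquiv.ofEq _ _ (map_range_mulRight_eq_range_mulLeft hanti hinv hse))

@[simp]
theorem coe_basisRangeMulLeft (hanti : ∀ x y : S, st (x * y) = st y * st x)
    (hinv : ∀ x : S, st (st x) = x) (hse : st e = e)
    (hli : LinearIndependent k fun i ↦ x i * e)
    (hspan : ∀ s : S, s * e ∈ Submodule.span k (Set.range fun i ↦ x i * e)) (i : ι) :
    (basisRangeMulLeft hanti hinv hse hli hspan i : S) = e * st (x i) := by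
  change st (basisRangeMulRight hli hspan i : S) = _
  rw [coe_basisRangeMulRight, hanti, hse]

end

theorem mult_map_isomorphism_general
    (k : Type*) [Field k] (S : Type*) [Ring S] [Algebra k S]
    (st : S →ₗ[k] S) (hanti : ∀ x y : S, st (x * y) = st y * st x)
    (hinv : ∀ x : S, st (st x) = x)
    (e : S) (he : e * e = e) (hse : st e = e)
    (A : Type*) [DecidableEq A]
    (x : A → S)
    (hli : LinearIndependent k (fun α : A => x α * e))
    (hspan : ∀ s : S, s * e ∈ Submodule.span k (Set.range fun α : A => x α * e))
    (x' : A → S)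
    (hdual : ∀ α β : A, e * st (x' β) * (x α * e) = if α = β then e else 0) :
    Function.Injective (multMap k S e) ∧
    LinearMap.range (multMap k S e) =
      Submodule.span k {z : S | ∃ a b : S, z = a * e * b} ∧
    LinearIndependent k (fun p : A × A => x p.1 * e * st (x p.2)) := by
  have hlin := linearIndependent_mul_mul_star hanti hinv hse hli.ne_zero hdual
  let B := (basisRangeMulRight hli hspan).tensorProduct (basisRangeMulLeft hanti hinv hse hli hspan)
  have hB : multMap k S e = B.constr k fun p : A × A ↦ x p.1 * e * st (x p.2) :=
    B.ext fun p ↦ by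
      rw [B.constr_basis]
      simp [B, Module.Basis.tensorProduct_apply', multMap, mul_assoc, ← mul_assoc e e, he]
  exact ⟨hB ▸ B.injective_constr_of_linearIndependent hlin, range_multMap he, hlin⟩

/-- Let `S` be a `k`-algebra with involutive anti-automorphism `*`, and
`e = e² = e*` an idempotent such that the left ideal `Se` has a basis
`{x_α e}` (so `eS` has basis `{(x_α e)* = e x_α*}`).  If dual elements are
available, i.e. for each `α` there is `x'_α` with
`e (x'_β)* (x_α e) = δ_{αβ} e`, then the multiplication map
`Se ⊗ eS → SeS` is an isomorphism (injective, with image the two-sided ideal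
`SeS`); in particular the elements `{x_α e x_β*}` are linearly independent. -/
theorem mult_map_isomorphism
    (k : Type*) [Field k] (S : Type*) [Ring S] [Algebra k S]
    (st : S →ₗ[k] S) (hanti : ∀ x y : S, st (x * y) = st y * st x)
    (hinv : ∀ x : S, st (st x) = x)
    (e : S) (he : e * e = e) (hse : st e = e)
    (A : Type*) [Fintype A] [DecidableEq A]
    (x : A → S)
    (hli : LinearIndependent k (fun α : A => x α * e))
    (hspan : ∀ s : S, s * e ∈ Submodule.span k (Set.range fun α : A => x α * e))
    (x' : A → S)
    (hdual : ∀ α β : A, e * st (x' β) * (x α * e) = if α = β then e else 0) :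
    Function.Injective (multMap k S e) ∧
    LinearMap.range (multMap k S e) =
      Submodule.span k {z : S | ∃ a b : S, z = a * e * b} ∧
    LinearIndependent k (fun p : A × A => x p.1 * e * st (x p.2)) :=
  mult_map_isomorphism_general k S st hanti hinv e he hse A x hli hspan x' hdual
end
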